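/- arXiv:2305.06471 — 2 statements merged into one kernel-verified Lean document; each statement's English description precedes it below -/
import Mathlib

section
/- Let P be a nonzero Laurent polynomial in m ≥ 2 variables. If both P^+ and (P(x̂))^+ are proper polynomials, then (P(x̂))^+ = (P^+(x̂))^+. -/
open scoped BigOperators Classical

noncomputable section

/-- Multivariate Laurent polynomials in `m` variables over `ℂ`,
realized as the group algebra of `ℤ^m`. -/
abbrev MvLaurent (m : ℕ) : Type := AddMonoidAlgebra ℂ (Fin m → ℤ)

namespace MvL

variable {m : ℕ}

/-- The monomial `c · x^α`. -/
def mono (α : Fin m → ℤ) (c : ℂ) : MvLaurent m := AddMonoidAlgebra.ofCoeff (Finsupp.single α c)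

/-- Evaluation of a Laurent polynomial at a point `x ∈ (ℂ*)^m`. -/
def eval (f : MvLaurent m) (x : Fin m → ℂ) : ℂ :=
  Finsupp.sum f.coeff fun α c => c * ∏ j, x j ^ (α j)

/-- Units of the Laurent-polynomial ring: the nonzero monomials. -/
def IsUnitL (f : MvLaurent m) : Prop :=
  ∃ (c : ℂ) (α : Fin m → ℤ), c ≠ 0 ∧ f = mono α c

/-- Irreducibility of a Laurent polynomial. -/
def IrreducibleL (f : MvLaurent m) : Prop :=
  f ≠ 0 ∧ ¬ IsUnitL f ∧ ∀ g h : MvLaurent m, f = g * h → IsUnitL g ∨ IsUnitL h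

/-- The zero set of `f` inside `(ℂ*)^m`. -/
def Vset (f : MvLaurent m) : Set (Fin m → ℂ) :=
  {x | (∀ j, x j ≠ 0) ∧ eval f x = 0}

/-- `f` meets a point `y` of `(ℂ ∪ {∞})^m` if the closure of `V(f)` contains `y`. -/
def Meets (f : MvLaurent m) (y : Fin m → OnePoint ℂ) : Prop :=
  y ∈ closure ((fun (x : Fin m → ℂ) (j : Fin m) => (x j : OnePoint ℂ)) '' Vset f)

/-- The point `0_m`. -/
def zeroPt (m : ℕ) : Fin m → OnePoint ℂ := fun _ => ((0 : ℂ) : OnePoint ℂ)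

/-- The point `(0_{m-1}, ∞)`. -/
def zeroInftyPt (m : ℕ) : Fin m → OnePoint ℂ :=
  fun j => if (j : ℕ) = m - 1 then (OnePoint.infty : OnePoint ℂ) else ((0 : ℂ) : OnePoint ℂ)

/-- Negate the last exponent: realizes `x̂ = (x_1,…,x_{m-1},x_m⁻¹)`. -/
def negLast (m : ℕ) (α : Fin m → ℤ) : Fin m → ℤ :=
  fun j => if (j : ℕ) = m - 1 then -(α j) else α j

/-- `f(x̂)`. -/
def hat (f : MvLaurent m) : MvLaurent m := AddMonoidAlgebra.ofCoeff (Finsupp.mapDomain (negLast m) f.coeff)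

/-- The least exponent of `x_j` occurring in `f` (junk value `0` for `f = 0`). -/
def alphaMin (f : MvLaurent m) (j : Fin m) : ℤ :=
  ((Finsupp.support f.coeff).image fun α => α j).min.untopD 0

/-- The vector `α_{0,f}`. -/
def alpha0 (f : MvLaurent m) : Fin m → ℤ := fun j => max (-(alphaMin f j)) 0

/-- `f^+ = x^{α_{0,f}} f`. -/
def fplus (f : MvLaurent m) : MvLaurent m :=
  AddMonoidAlgebra.ofCoeff (Finsupp.mapDomain (fun α => α + alpha0 f) f.coeff)

/-- Total degree of an exponent vector. -/
def degOf (α : Fin m → ℤ) : ℤ := ∑ j, α j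

/-- Degree of a Laurent polynomial (junk value `0` for `f = 0`). -/
def degL (f : MvLaurent m) : ℤ :=
  ((Finsupp.support f.coeff).image degOf).max.unbotD 0

/-- Minimal total degree occurring in `f`. -/
def lowDeg (f : MvLaurent m) : ℤ :=
  ((Finsupp.support f.coeff).image degOf).min.untopD 0

/-- The lowest degree component of `f`. -/
def lowComp (f : MvLaurent m) : MvLaurent m :=
  AddMonoidAlgebra.ofCoeff (Finsupp.filter (fun α => degOf α = lowDeg f) f.coeff)

/-- `l`-degree of an exponent vector. -/
def degW (l : Fin m → ℤ) (α : Fin m → ℤ) : ℤ := ∑ j, l j * α j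

/-- Minimal `l`-degree occurring in `f`. -/
def lowDegW (l : Fin m → ℤ) (f : MvLaurent m) : ℤ :=
  ((Finsupp.support f.coeff).image (degW l)).min.untopD 0

/-- The component of lowest `l`-degree of `f`. -/
def lowCompW (l : Fin m → ℤ) (f : MvLaurent m) : MvLaurent m :=
  AddMonoidAlgebra.ofCoeff (Finsupp.filter (fun α => degW l α = lowDegW l f) f.coeff)

/-- `f(x^{⊙l})`. -/
def odotPow (l : Fin m → ℤ) (f : MvLaurent m) : MvLaurent m :=
  AddMonoidAlgebra.ofCoeff (Finsupp.mapDomain (fun (α : Fin m → ℤ) j => l j * α j) f.coeff)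

/-- `f` is a polynomial: all exponents are nonnegative. -/
def IsPolynomialL (f : MvLaurent m) : Prop :=
  ∀ α ∈ Finsupp.support f.coeff, ∀ j, 0 ≤ α j

/-- A positive monomial `c x^α`: `c ≠ 0`, `α ≠ 0`, all `α_j ≥ 0`. -/
def IsPosMonomial (f : MvLaurent m) : Prop :=
  ∃ (c : ℂ) (α : Fin m → ℤ), c ≠ 0 ∧ α ≠ 0 ∧ (∀ j, 0 ≤ α j) ∧ f = mono α c

/-- A proper polynomial: a polynomial with no positive monomial factor
(in the polynomial ring). -/
def IsProper (f : MvLaurent m) : Prop :=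
  IsPolynomialL f ∧
    ¬ ∃ g h : MvLaurent m, IsPosMonomial g ∧ IsPolynomialL h ∧ f = g * h

/-- `f` is a unit times a product of exactly `k` irreducible Laurent polynomials. -/
def HasFactorization (f : MvLaurent m) (k : ℕ) : Prop :=
  ∃ (u : MvLaurent m) (s : Multiset (MvLaurent m)),
    IsUnitL u ∧ (∀ g ∈ s, IrreducibleL g) ∧ Multiset.card s = k ∧ f = u * s.prod

/-- `f` has at most `k` irreducible components. -/
def HasAtMostComponents (f : MvLaurent m) (k : ℕ) : Prop :=
  ∃ j ≤ k, HasFactorization f j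

/-- `f` has exactly `k` irreducible components (and not fewer). -/
def HasExactlyComponents (f : MvLaurent m) (k : ℕ) : Prop :=
  HasFactorization f k ∧ ∀ j < k, ¬ HasFactorization f j

/-- Irreducibility in the polynomial ring `ℂ[x_1,…,x_m]`
(units there are the nonzero constants). -/
def IrreduciblePolyL (g : MvLaurent m) : Prop :=
  IsPolynomialL g ∧ g ≠ 0 ∧ (¬ ∃ c : ℂ, g = mono 0 c) ∧
    ∀ a b : MvLaurent m, IsPolynomialL a → IsPolynomialL b → g = a * b →
      (∃ c : ℂ, c ≠ 0 ∧ a = mono 0 c) ∨ (∃ c : ℂ, c ≠ 0 ∧ b = mono 0 c)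

end MvL

open MvL

/-! `P⁺` and `P(x̂)⁺` only translate exponents, so everything reduces to bookkeeping of the
minimal exponents `alphaMin`. A proper polynomial has no factor `x_j`, hence properness of `P⁺`
forces `alphaMin P ≤ 0`, and then `P⁺ = x^{-alphaMin P} P`. Inverting `x_m` turns the translation
by `x^{α₀}` into a translation of `Q = P(x̂)`, and normalizing a translate `x^b Q` gives `Q⁺`
back as soon as neither `Q` nor `x^b Q` has a positive minimal exponent; for `x^b Q = P⁺(x̂)`
this holds because each variable occurs in `P⁺` with exponent `0`. -/

namespace MvL

open Finsupp

variable {m : ℕ}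

/-- Multiplication by the monomial `x^b`. -/
def shift (b : Fin m → ℤ) (f : MvLaurent m) : MvLaurent m :=
  AddMonoidAlgebra.ofCoeff (mapDomain (· + b) f.coeff)

theorem fplus_eq_shift (f : MvLaurent m) : fplus f = shift (alpha0 f) f := rfl

theorem support_shift (b : Fin m → ℤ) (f : MvLaurent m) :
    (shift b f).coeff.support = f.coeff.support.image (· + b) :=
  mapDomain_support_of_injective (add_left_injective b) f.coeff

theorem shift_ne_zero {f : MvLaurent m} (hf : f ≠ 0) (b : Fin m → ℤ) : shift b f ≠ 0 := by
  rw [Ne, ← AddMonoidAlgebra.coeff_eq_zero, ← support_eq_empty, support_shift,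
    Finset.image_eq_empty, support_eq_empty, AddMonoidAlgebra.coeff_eq_zero]
  exact hf

theorem shift_shift (b c : Fin m → ℤ) (f : MvLaurent m) :
    shift c (shift b f) = shift (b + c) f := by
  simp only [shift, AddMonoidAlgebra.coeff_ofCoeff, ← mapDomain_comp]
  congr 2
  funext α
  simp [add_assoc]

theorem shift_zero (f : MvLaurent m) : shift 0 f = f := by
  simp only [shift, add_zero]
  exact (congrArg _ mapDomain_id).trans (AddMonoidAlgebra.ofCoeff_coeff f)

theorem negLast_involutive : Function.Involutive (negLast m) := by
  intro α
  funext j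
  simp only [negLast]
  split_ifs <;> simp

theorem negLast_add (α β : Fin m → ℤ) : negLast m (α + β) = negLast m α + negLast m β := by
  funext j
  simp only [negLast, Pi.add_apply]
  split_ifs <;> ring

theorem support_hat (f : MvLaurent m) :
    (hat f).coeff.support = f.coeff.support.image (negLast m) :=
  mapDomain_support_of_injective negLast_involutive.injective f.coeff

theorem hat_ne_zero {f : MvLaurent m} (hf : f ≠ 0) : hat f ≠ 0 := by
  rw [Ne, ← AddMonoidAlgebra.coeff_eq_zero, ← support_eq_empty, support_hat,
    Finset.image_eq_empty, support_eq_empty, AddMonoidAlgebra.coeff_eq_zero]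
  exact hf

theorem hat_shift (b : Fin m → ℤ) (f : MvLaurent m) :
    hat (shift b f) = shift (negLast m b) (hat f) := by
  simp only [hat, shift, AddMonoidAlgebra.coeff_ofCoeff, ← mapDomain_comp]
  congr 2
  funext α
  exact negLast_add α b

theorem alphaMin_le {f : MvLaurent m} {α : Fin m → ℤ} (hα : α ∈ f.coeff.support) (j : Fin m) :
    alphaMin f j ≤ α j := by
  have hne : (f.coeff.support.image fun α => α j).Nonempty := ⟨_, Finset.mem_image_of_mem _ hα⟩
  rw [alphaMin, ← Finset.coe_min' hne, WithTop.untopD_coe]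
  exact Finset.min'_le _ _ (Finset.mem_image_of_mem _ hα)

theorem exists_mem_support_alphaMin_eq {f : MvLaurent m} (hf : f ≠ 0) (j : Fin m) :
    ∃ α ∈ f.coeff.support, α j = alphaMin f j := by
  have hne : (f.coeff.support.image fun α => α j).Nonempty :=
    (support_nonempty_iff.2 (by simpa using hf)).image _
  rw [alphaMin, ← Finset.coe_min' hne, WithTop.untopD_coe]
  simpa using Finset.min'_mem _ hne

theorem alphaMin_shift {f : MvLaurent m} (hf : f ≠ 0) (b : Fin m → ℤ) (j : Fin m) :
    alphaMin (shift b f) j = alphaMin f j + b j := by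
  apply le_antisymm
  · obtain ⟨α, hα, hαj⟩ := exists_mem_support_alphaMin_eq hf j
    have := alphaMin_le (support_shift b f ▸ Finset.mem_image_of_mem (· + b) hα) j
    simpa [hαj] using this
  · obtain ⟨γ, hγ, hγj⟩ := exists_mem_support_alphaMin_eq (shift_ne_zero hf b) j
    rw [support_shift, Finset.mem_image] at hγ
    obtain ⟨α, hα, rfl⟩ := hγ
    have := alphaMin_le hα j
    simp only [Pi.add_apply] at hγj
    omega

theorem mono_one_mul (a : Fin m → ℤ) (f : MvLaurent m) : mono a 1 * f = shift a f := by
  obtain ⟨f⟩ := f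
  induction f using Finsupp.induction with
  | zero => simp [shift]
  | single_add β c f _ _ ih =>
    simp only [shift] at ih ⊢
    rw [AddMonoidAlgebra.ofCoeff_add, mul_add, ih, mapDomain_add, mapDomain_single,
      AddMonoidAlgebra.ofCoeff_add, add_comm β a]
    congr 1
    exact (AddMonoidAlgebra.single_mul_single (R := ℂ) a β 1 c).trans (by rw [one_mul]; rfl)

theorem not_isProper_of_le_apply {g : MvLaurent m} {j : Fin m} {k : ℤ} (hk : 0 < k)
    (hg : ∀ α ∈ g.coeff.support, k ≤ α j) : ¬ IsProper g := by
  rintro ⟨hpoly, hno⟩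
  refine hno ⟨mono (Pi.single j k) 1, shift (-Pi.single j k) g,
    ⟨1, Pi.single j k, one_ne_zero, ?_, ?_, rfl⟩, ?_, ?_⟩
  · exact fun h => hk.ne' (by simpa using congrFun h j)
  · intro i
    by_cases hij : i = j
    · subst hij; simp [hk.le]
    · simp [hij]
  · intro α hα i
    rw [support_shift, Finset.mem_image] at hα
    obtain ⟨γ, hγ, rfl⟩ := hα
    by_cases hij : i = j
    · subst hij; simpa using hg γ hγ
    · simpa [hij] using hpoly γ hγ i
  · rw [mono_one_mul, shift_shift, neg_add_cancel, shift_zero]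

theorem alphaMin_nonpos_of_isProper_fplus {f : MvLaurent m} (hp : IsProper (fplus f))
    (j : Fin m) : alphaMin f j ≤ 0 := by
  by_contra! hpos
  refine not_isProper_of_le_apply (j := j) hpos (fun α hα => ?_) hp
  rw [fplus_eq_shift, support_shift, Finset.mem_image] at hα
  obtain ⟨γ, hγ, rfl⟩ := hα
  have := alphaMin_le hγ j
  simp only [Pi.add_apply, alpha0]
  omega

theorem fplus_eq_shift_neg_alphaMin {f : MvLaurent m} (h : ∀ j, alphaMin f j ≤ 0) :
    fplus f = shift (-alphaMin f) f := by
  rw [fplus_eq_shift]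
  congr
  funext j
  simp [alpha0, h j]

theorem fplus_shift {f : MvLaurent m} (hf : f ≠ 0) {b : Fin m → ℤ}
    (h : ∀ j, alphaMin f j ≤ 0) (hb : ∀ j, alphaMin (shift b f) j ≤ 0) :
    fplus (shift b f) = fplus f := by
  rw [fplus_eq_shift_neg_alphaMin h, fplus_eq_shift_neg_alphaMin hb, shift_shift]
  congr
  funext j
  simp [alphaMin_shift hf]

theorem exists_mem_support_fplus_apply_eq_zero {f : MvLaurent m} (hf : f ≠ 0) {j : Fin m}
    (h : alphaMin f j ≤ 0) : ∃ α ∈ (fplus f).coeff.support, α j = 0 := by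
  obtain ⟨α, hα, hαj⟩ := exists_mem_support_alphaMin_eq hf j
  refine ⟨α + alpha0 f, support_shift _ f ▸ Finset.mem_image_of_mem _ hα, ?_⟩
  simp only [Pi.add_apply, alpha0]
  omega

theorem alphaMin_hat_nonpos {g : MvLaurent m} {α : Fin m → ℤ} (hα : α ∈ g.coeff.support)
    {j : Fin m} (hαj : α j = 0) : alphaMin (hat g) j ≤ 0 := by
  have := alphaMin_le (support_hat g ▸ Finset.mem_image_of_mem (negLast m) hα) j
  simp only [negLast, hαj, neg_zero, ite_self] at this
  exact this

end MvL

theorem fplus_hat_eq_fplus_hat_fplus_general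
    (m : ℕ)
    (P : MvLaurent m) (hP0 : P ≠ 0)
    (h1 : IsProper (fplus P)) (h2 : IsProper (fplus (hat P))) :
    fplus (hat P) = fplus (hat (fplus P)) := by
  have hminP := alphaMin_nonpos_of_isProper_fplus h1
  have hminHat := alphaMin_nonpos_of_isProper_fplus h2
  have hminHatFplus (j : Fin m) : alphaMin (hat (fplus P)) j ≤ 0 := by
    obtain ⟨α, hα, hαj⟩ := exists_mem_support_fplus_apply_eq_zero hP0 (hminP j)
    exact alphaMin_hat_nonpos hα hαj
  rw [fplus_eq_shift P, hat_shift] at hminHatFplus ⊢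
  exact (fplus_shift (hat_ne_zero hP0) hminHat hminHatFplus).symm

/-- **Remark 2.6**: if `P⁺` and `(P(x̂))⁺` are proper polynomials, then
`(P(x̂))⁺ = (P⁺(x̂))⁺`. -/
theorem fplus_hat_eq_fplus_hat_fplus
    (m : ℕ) (hm : 2 ≤ m)
    (P : MvLaurent m) (hP0 : P ≠ 0)
    (h1 : IsProper (fplus P)) (h2 : IsProper (fplus (hat P))) :
    fplus (hat P) = fplus (hat (fplus P)) :=
  fplus_hat_eq_fplus_hat_fplus_general m P hP0 h1 h2
end
end

section
/- Fix d, ν ∈ ℕ, finitely supported coefficients a^{ij} : ℤ^d → ℂ (1 ≤ i,j ≤ ν), q ∈ ℕ^d, and a q-periodic V : {1,…,ν}×ℤ^d → ℂ. Define P̃(z,λ) = det(D_z + B_V − λI), a Laurent polynomial in z = (z_1,…,z_d) and polynomial in λ. Then P̃(μ_w ⊙ z, λ) = P̃(z, λ) for every w ∈ W, z ∈ (ℂ∖{0})^d and λ ∈ ℂ; consequently there exists a function P(y,λ), Laurent polynomial in y ∈ (ℂ∖{0})^d and polynomial in λ, such that P̃(z,λ) = P(z^{⊙q}, λ) for all z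 and λ. -/
open scoped BigOperators Classical

noncomputable section

namespace Floquet

/-- `e^{2πi r}`. -/
def e2πi (r : ℂ) : ℂ := Complex.exp (2 * Real.pi * Complex.I * r)

/-- The fundamental domain `W = {w ∈ ℤ^d : 0 ≤ w_i < q_i}`. -/
abbrev W (d : ℕ) (q : Fin d → ℕ) : Type := (t : Fin d) → Fin (q t)

/-- Inclusion of `W` into `ℤ^d`. -/
def wz {d : ℕ} {q : Fin d → ℕ} (w : W d q) : Fin d → ℤ := fun t => ((w t : ℕ) : ℤ)

/-- `Q = q_1 ⋯ q_d`. -/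
def Qn {d : ℕ} (q : Fin d → ℕ) : ℕ := ∏ t, q t

/-- `μ_n = (e^{2πi n_1/q_1}, …, e^{2πi n_d/q_d})`. -/
def μ {d : ℕ} (q : Fin d → ℕ) (n : Fin d → ℤ) : Fin d → ℂ :=
  fun t => e2πi ((n t : ℂ) / (q t : ℂ))

/-- The symbol `p(z) = (p_{ij}(z))`, `p_{ij}(z) = Σ_n a^{ij}_n z^{-n}`. -/
def pMat {d ν : ℕ} (a : Fin ν → Fin ν → ((Fin d → ℤ) →₀ ℂ)) (z : Fin d → ℂ) :
    Matrix (Fin ν) (Fin ν) ℂ :=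
  fun i j => Finsupp.sum (a i j) fun n c => c * ∏ t, z t ^ (-(n t))

/-- The block-diagonal operator `D_z`, `[D_z u](w) = p(μ_w ⊙ z) u(w)`. -/
def Dmat {d ν : ℕ} (a : Fin ν → Fin ν → ((Fin d → ℤ) →₀ ℂ)) (q : Fin d → ℕ)
    (z : Fin d → ℂ) : Matrix (Fin ν × W d q) (Fin ν × W d q) ℂ :=
  fun x y => if x.2 = y.2 then pMat a (fun t => μ q (wz x.2) t * z t) x.1 y.1 else 0

/-- The matrix `B_V` built from the Fourier coefficients of `V`: its
`((i,w),(j,w'))` entry is `δ_{ij} V̂_i(q^* ⊙ (w - w'))`, where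
`V̂_j(l) = Q^{-1/2} Σ_{n ∈ W} e^{-2πi⟨l,n⟩} V(j,n)`. -/
def Bmat {d : ℕ} (ν : ℕ) (q : Fin d → ℕ) (V : Fin ν → (Fin d → ℤ) → ℂ) :
    Matrix (Fin ν × W d q) (Fin ν × W d q) ℂ :=
  fun x y =>
    if x.1 = y.1 then
      ((Real.sqrt (Qn q) : ℂ))⁻¹ *
        ∑ n : W d q,
          Complex.exp (-(2 * Real.pi * Complex.I) *
            ∑ t, (((wz x.2 t - wz y.2 t : ℤ) : ℂ) / (q t : ℂ)) * ((wz n t : ℤ) : ℂ)) *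
          V x.1 (wz n)
    else 0

/-- The fiber operator `H̃(k)`:
`[H̃(k)u](i,w) = V(i,w)u(i,w) + Σ_{j,w',l} e^{2πi⟨l⊙q,k⟩} a^{ij}_{w-(w'+l⊙q)} u(j,w')`.
The (finite) sum over `l ∈ ℤ^d` is realized as a sum over the support of
`a^{ij}`: the index `n` contributes iff `w - w' - n = l ⊙ q` for (a unique)
`l ∈ ℤ^d`, i.e. iff `q_t ∣ w_t - w'_t - n_t` for all `t`, in which case
`⟨l⊙q, k⟩ = Σ_t (w_t - w'_t - n_t) k_t`. -/
def Htilde {d ν : ℕ} (a : Fin ν → Fin ν → ((Fin d → ℤ) →₀ ℂ)) (q : Fin d → ℕ)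
    (V : Fin ν → (Fin d → ℤ) → ℂ) (k : Fin d → ℝ) :
    Matrix (Fin ν × W d q) (Fin ν × W d q) ℂ :=
  fun x y =>
    (if x = y then V x.1 (wz x.2) else 0) +
      Finsupp.sum (a x.1 y.1) fun n c =>
        if ∀ t, ((q t : ℤ) ∣ (wz x.2 t - wz y.2 t - n t)) then
          Complex.exp (2 * Real.pi * Complex.I *
            ∑ t, ((wz x.2 t - wz y.2 t - n t : ℤ) : ℂ) * (k t : ℂ)) * c
        else 0

/-- The Floquet transform `F(k)`:
`[F(k)u](j,w) = Q^{-1/2} Σ_{n∈W} e^{-2πi⟨w⊙q^* + k, n⟩} u(j,n)`. -/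
def Fmat {d : ℕ} (ν : ℕ) (q : Fin d → ℕ) (k : Fin d → ℝ) :
    Matrix (Fin ν × W d q) (Fin ν × W d q) ℂ :=
  fun x y =>
    if x.1 = y.1 then
      ((Real.sqrt (Qn q) : ℂ))⁻¹ *
        Complex.exp (-(2 * Real.pi * Complex.I) *
          ∑ t, (((wz x.2 t : ℤ) : ℂ) / (q t : ℂ) + (k t : ℂ)) * ((wz y.2 t : ℤ) : ℂ))
    else 0

/-- `V` is `q`-periodic. -/
def QPeriodic {d ν : ℕ} (q : Fin d → ℕ) (V : Fin ν → (Fin d → ℤ) → ℂ) : Prop :=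
  ∀ (j : Fin ν) (n lv : Fin d → ℤ), V j (fun t => n t + lv t * (q t : ℤ)) = V j n

end Floquet

open Floquet Matrix

/-!
Translating `z` by `μ_w` permutes the diagonal blocks of `D_z`, since
`p(μ_{w'} ⊙ μ_w ⊙ z) = p(μ_{w+w'} ⊙ z)`, and leaves `B_V` unchanged, because its entries depend on
`w - w'` only modulo `q`. So `D_{μ_w ⊙ z} + B_V - λ` is a simultaneous row and column permutation
of `D_z + B_V - λ`, and the determinants agree.

For the descent, run the same argument over Laurent polynomials in `z` with coefficients in `ℂ[λ]`:
the substitution `z ↦ μ_w ⊙ z` multiplies the coefficient of `z^β` by `μ_w^β`, and fixes the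
formal determinant. Taking `w = e_t` shows `q_t ∣ β_t` for every monomial `z^β` that occurs.
-/

namespace AddMonoidAlgebra

variable {k G : Type*} [CommSemiring k] [AddCommMonoid G]

def twist (χ : Multiplicative G →* k) : k[G] →ₐ[k] k[G] :=
  lift k k[G] G ((algebraMap k k[G]).toMonoidHom.comp χ * of k G)

theorem twist_single (χ : Multiplicative G →* k) (g : G) (r : k) :
    twist χ (single g r) = single g (χ (.ofAdd g) * r) := by
  simp [twist, of_apply, mul_comm]

theorem coeff_twist (χ : Multiplicative G →* k) (f : k[G]) (g : G) :
    (twist χ f).coeff g = χ (.ofAdd g) * f.coeff g := by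
  induction f using induction_linear with
  | zero => simp
  | add f f' hf hf' => simp [coeff_add, hf, hf', mul_add]
  | single g' r =>
    rw [twist_single, coeff_single, coeff_single, Finsupp.single_apply, Finsupp.single_apply]
    split_ifs with h <;> simp [h]

theorem twist_twist (χ ψ : Multiplicative G →* k) (f : k[G]) :
    twist χ (twist ψ f) = twist (χ * ψ) f := by
  ext g
  simp only [coeff_twist, MonoidHom.mul_apply, mul_assoc]

theorem coeff_eq_zero_of_twist_eq_self [IsDomain k] {χ : Multiplicative G →* k} {f : k[G]}
    (hf : twist χ f = f) {g : G} (hχ : χ (.ofAdd g) ≠ 1) : f.coeff g = 0 := by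
  by_contra h
  exact hχ ((mul_eq_right₀ h).1 (by rw [← coeff_twist, hf]))

theorem liftNCRingHom_twist {S : Type*} [CommSemiring S] (φ : k →+* S)
    (ψ : Multiplicative G →* S) (χ : Multiplicative G →* k) (f : k[G]) :
    liftNCRingHom φ ψ (fun _ _ => .all _ _) (twist χ f) =
      liftNCRingHom φ (φ.toMonoidHom.comp χ * ψ) (fun _ _ => .all _ _) f := by
  induction f using induction_linear with
  | zero => simp
  | add f f' hf hf' => simp [hf, hf']
  | single g r =>
    simp only [twist_single, liftNCRingHom_single, map_mul, RingHom.toMonoidHom_eq_coe,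
      MonoidHom.mul_apply, MonoidHom.coe_comp, MonoidHom.coe_coe, Function.comp_apply]
    ring

end AddMonoidAlgebra

theorem Matrix.charmatrix_map_eval {n R : Type*} [Fintype n] [DecidableEq n] [CommRing R]
    (M : Matrix n n R) (r : R) : (charmatrix M).map (Polynomial.eval r) = r • 1 - M := by
  ext i j
  by_cases h : i = j
  · subst h; simp [charmatrix_apply_eq]
  · simp [charmatrix_apply_ne _ _ _ h, one_apply_ne h]

theorem Matrix.blockDiagonal_submatrix_prodCongr {m n o o' α : Type*} [DecidableEq o]
    [DecidableEq o'] [Zero α] (M : o → Matrix m n α) (e : o' ≃ o) :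
    (blockDiagonal M).submatrix ((Equiv.refl m).prodCongr e) ((Equiv.refl n).prodCongr e) =
      blockDiagonal fun k => M (e k) := by
  ext ⟨i, k⟩ ⟨j, k'⟩
  simp [blockDiagonal_apply, e.apply_eq_iff_eq]

namespace Floquet

open AddMonoidAlgebra Polynomial

variable {d ν : ℕ} {q : Fin d → ℕ}

theorem e2πi_add (r s : ℂ) : e2πi (r + s) = e2πi r * e2πi s := by
  simp only [e2πi, mul_add, Complex.exp_add]

theorem e2πi_intCast (k : ℤ) : e2πi k = 1 := by
  rw [e2πi, mul_comm, Complex.exp_int_mul_two_pi_mul_I]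

theorem e2πi_intCast_div_congr {n : ℕ} (hn : n ≠ 0) {m m' : ℤ} (h : m ≡ m' [ZMOD n]) :
    e2πi (m / n) = e2πi (m' / n) := by
  obtain ⟨k, hk⟩ := Int.modEq_iff_dvd.1 h.symm
  have hm : (m : ℂ) = m' + n * k := by exact_mod_cast (by omega : m = m' + n * k)
  rw [hm, add_div, mul_div_cancel_left₀ _ (Nat.cast_ne_zero.2 hn), e2πi_add, e2πi_intCast, mul_one]

theorem μ_ne_zero (q : Fin d → ℕ) (n : Fin d → ℤ) (t : Fin d) : μ q n t ≠ 0 :=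
  Complex.exp_ne_zero _

theorem wz_add_modEq [∀ t, NeZero (q t)] (w x : W d q) (t : Fin d) :
    wz (w + x) t ≡ wz w t + wz x t [ZMOD q t] := by
  simp [wz, Int.ModEq, Fin.val_add]

theorem μ_add [∀ t, NeZero (q t)] (w x : W d q) (t : Fin d) :
    μ q (wz (w + x)) t = μ q (wz w) t * μ q (wz x) t := by
  rw [μ, μ, μ, ← e2πi_add, ← add_div, e2πi_intCast_div_congr (NeZero.ne _) (wz_add_modEq w x t)]
  push_cast
  rfl

theorem exp_neg_two_pi_I_sum_div (u n : Fin d → ℤ) :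
    Complex.exp (-(2 * Real.pi * Complex.I) * ∑ t, ((u t : ℂ) / (q t : ℂ)) * (n t : ℂ)) =
      ∏ t, e2πi ((-(u t * n t) : ℤ) / q t) := by
  simp only [e2πi, ← Complex.exp_sum, Finset.mul_sum]
  congr 1
  refine Finset.sum_congr rfl fun t _ => ?_
  push_cast
  ring

/-- Laurent polynomials in `z`, with coefficients polynomials in `λ`. -/
abbrev LaurentRing (d : ℕ) : Type := AddMonoidAlgebra ℂ[X] (Fin d → ℤ)

def monomialChar (z : Fin d → ℂ) (hz : ∀ t, z t ≠ 0) : Multiplicative (Fin d → ℤ) →* ℂ where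
  toFun β := ∏ t, z t ^ β.toAdd t
  map_one' := by simp
  map_mul' β γ := by simp [zpow_add₀ (hz _), Finset.prod_mul_distrib]

theorem monomialChar_mul (u z : Fin d → ℂ) (hu : ∀ t, u t ≠ 0) (hz : ∀ t, z t ≠ 0) :
    monomialChar (fun t => u t * z t) (fun t => mul_ne_zero (hu t) (hz t)) =
      monomialChar u hu * monomialChar z hz := by
  ext β
  simp [monomialChar, mul_zpow, Finset.prod_mul_distrib]

def evalAt (z : Fin d → ℂ) (hz : ∀ t, z t ≠ 0) (lam : ℂ) : LaurentRing d →+* ℂ :=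
  liftNCRingHom (evalRingHom lam) (monomialChar z hz) fun _ _ => .all _ _

theorem evalAt_apply (z : Fin d → ℂ) (hz : ∀ t, z t ≠ 0) (lam : ℂ) (f : LaurentRing d) :
    evalAt z hz lam f = f.coeff.sum fun β p => p.eval lam * ∏ t, z t ^ β t := by
  rfl

theorem evalAt_algebraMap (z : Fin d → ℂ) (hz : ∀ t, z t ≠ 0) (lam : ℂ) (p : ℂ[X]) :
    evalAt z hz lam (algebraMap ℂ[X] (LaurentRing d) p) = p.eval lam := by
  simp [evalAt, monomialChar]

def twistμ (w : W d q) : LaurentRing d →ₐ[ℂ[X]] LaurentRing d :=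
  twist ((C : ℂ →+* ℂ[X]).toMonoidHom.comp (monomialChar (μ q (wz w)) (μ_ne_zero q _)))

theorem evalAt_twistμ (w : W d q) (z : Fin d → ℂ) (hz : ∀ t, z t ≠ 0) (lam : ℂ)
    (f : LaurentRing d) :
    evalAt z hz lam (twistμ w f) =
      evalAt (fun t => μ q (wz w) t * z t) (fun t => mul_ne_zero (μ_ne_zero q _ t) (hz t)) lam
        f := by
  rw [evalAt, evalAt, twistμ, liftNCRingHom_twist]
  congr 2
  rw [monomialChar_mul _ _ (μ_ne_zero q _) hz]
  ext β
  simp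

theorem twistμ_twistμ [∀ t, NeZero (q t)] (w x : W d q) (f : LaurentRing d) :
    twistμ w (twistμ x f) = twistμ (w + x) f := by
  rw [twistμ, twistμ, twistμ, twist_twist]
  congr 2
  ext β
  simp [monomialChar, μ_add, mul_zpow, Finset.prod_mul_distrib]

def laurentSymbol (a : Fin ν → Fin ν → ((Fin d → ℤ) →₀ ℂ)) :
    Matrix (Fin ν) (Fin ν) (LaurentRing d) :=
  fun i j => (a i j).sum fun n c => single (-n) (C c)

theorem laurentSymbol_map_evalAt (a : Fin ν → Fin ν → ((Fin d → ℤ) →₀ ℂ)) (z : Fin d → ℂ)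
    (hz : ∀ t, z t ≠ 0) (lam : ℂ) : (laurentSymbol a).map (evalAt z hz lam) = pMat a z := by
  ext i j
  simp [laurentSymbol, pMat, map_finsuppSum, evalAt, monomialChar]

def formalMatrix (a : Fin ν → Fin ν → ((Fin d → ℤ) →₀ ℂ)) (q : Fin d → ℕ)
    (V : Fin ν → (Fin d → ℤ) → ℂ) : Matrix (Fin ν × W d q) (Fin ν × W d q) (LaurentRing d) :=
  blockDiagonal (fun w => (laurentSymbol a).map (twistμ w)) -
    (charmatrix (Bmat ν q V)).map (algebraMap ℂ[X] (LaurentRing d))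

theorem formalMatrix_map_evalAt (a : Fin ν → Fin ν → ((Fin d → ℤ) →₀ ℂ))
    (V : Fin ν → (Fin d → ℤ) → ℂ) (z : Fin d → ℂ) (hz : ∀ t, z t ≠ 0) (lam : ℂ) :
    (formalMatrix a q V).map (evalAt z hz lam) = Dmat a q z + Bmat ν q V - lam • 1 := by
  have hD : (blockDiagonal fun w => (laurentSymbol a).map (twistμ w)).map (evalAt z hz lam) =
      Dmat a q z := by
    have hcomp (w : W d q) : evalAt z hz lam ∘ twistμ w =
        evalAt (fun t => μ q (wz w) t * z t) (fun t => mul_ne_zero (μ_ne_zero q _ t) (hz t)) lam :=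
      funext (evalAt_twistμ w z hz lam)
    simp only [blockDiagonal_map _ _ (map_zero _), map_map, hcomp, laurentSymbol_map_evalAt]
    rfl
  have hB : ((charmatrix (Bmat ν q V)).map (algebraMap ℂ[X] (LaurentRing d))).map
      (evalAt z hz lam) = lam • 1 - Bmat ν q V := by
    rw [map_map, ← charmatrix_map_eval]
    congr 1
    exact funext (evalAt_algebraMap z hz lam)
  rw [formalMatrix, Matrix.map_sub _ (map_sub _), hD, hB]
  abel

theorem Bmat_apply_add_add [∀ t, NeZero (q t)] (V : Fin ν → (Fin d → ℤ) → ℂ) (w : W d q)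
    (x y : Fin ν × W d q) : Bmat ν q V (x.1, w + x.2) (y.1, w + y.2) = Bmat ν q V x y := by
  have hphase (n : W d q) :
      Complex.exp (-(2 * Real.pi * Complex.I) * ∑ t,
          (((wz (w + x.2) t - wz (w + y.2) t : ℤ) : ℂ) / (q t : ℂ)) * ((wz n t : ℤ) : ℂ)) =
        Complex.exp (-(2 * Real.pi * Complex.I) * ∑ t,
          (((wz x.2 t - wz y.2 t : ℤ) : ℂ) / (q t : ℂ)) * ((wz n t : ℤ) : ℂ)) := by
    rw [exp_neg_two_pi_I_sum_div (fun t => wz (w + x.2) t - wz (w + y.2) t),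
      exp_neg_two_pi_I_sum_div (fun t => wz x.2 t - wz y.2 t)]
    refine Finset.prod_congr rfl fun t _ => e2πi_intCast_div_congr (NeZero.ne _) ?_
    have h := (((wz_add_modEq w x.2 t).sub (wz_add_modEq w y.2 t)).mul_right (wz n t)).neg
    rwa [add_sub_add_left_eq_sub] at h
  simp only [Bmat, hphase]

def blockShift [∀ t, NeZero (q t)] (w : W d q) : Fin ν × W d q ≃ Fin ν × W d q :=
  (Equiv.refl _).prodCongr (Equiv.addLeft w)

theorem Bmat_submatrix_blockShift [∀ t, NeZero (q t)] (V : Fin ν → (Fin d → ℤ) → ℂ)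
    (w : W d q) : (Bmat ν q V).submatrix (blockShift w) (blockShift w) = Bmat ν q V := by
  ext x y
  exact Bmat_apply_add_add V w x y

theorem formalMatrix_map_twistμ [∀ t, NeZero (q t)] (a : Fin ν → Fin ν → ((Fin d → ℤ) →₀ ℂ))
    (V : Fin ν → (Fin d → ℤ) → ℂ) (w : W d q) :
    (formalMatrix a q V).map (twistμ w) =
      (formalMatrix a q V).submatrix (blockShift w) (blockShift w) := by
  have hD : (blockDiagonal fun v => (laurentSymbol a).map (twistμ v)).map (twistμ w) =
      (blockDiagonal fun v => (laurentSymbol a).map (twistμ v)).submatrix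
        (blockShift w) (blockShift w) := by
    have hcomp (v : W d q) : twistμ w ∘ twistμ v = twistμ (w + v) := funext (twistμ_twistμ w v)
    rw [blockDiagonal_map _ _ (map_zero _), blockShift, blockDiagonal_submatrix_prodCongr]
    simp only [map_map, hcomp, Equiv.coe_addLeft]
  have hB : ((charmatrix (Bmat ν q V)).map (algebraMap ℂ[X] (LaurentRing d))).map (twistμ w) =
      ((charmatrix (Bmat ν q V)).map (algebraMap ℂ[X] (LaurentRing d))).submatrix
        (blockShift w) (blockShift w) := by
    have hconst : twistμ w ∘ algebraMap ℂ[X] (LaurentRing d) = algebraMap ℂ[X] (LaurentRing d) :=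
      funext (twistμ w).commutes
    have := charmatrix_reindex (M := Bmat ν q V) (blockShift w).symm
    simp only [reindex_apply, Equiv.symm_symm, Bmat_submatrix_blockShift] at this
    rw [map_map, hconst, submatrix_map, ← this]
  rw [formalMatrix, Matrix.map_sub _ (map_sub _), hD, hB]
  rfl

def formalDet (a : Fin ν → Fin ν → ((Fin d → ℤ) →₀ ℂ)) (q : Fin d → ℕ)
    (V : Fin ν → (Fin d → ℤ) → ℂ) : LaurentRing d :=
  (formalMatrix a q V).det

theorem evalAt_formalDet (a : Fin ν → Fin ν → ((Fin d → ℤ) →₀ ℂ))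
    (V : Fin ν → (Fin d → ℤ) → ℂ) (z : Fin d → ℂ) (hz : ∀ t, z t ≠ 0) (lam : ℂ) :
    evalAt z hz lam (formalDet a q V) = (Dmat a q z + Bmat ν q V - lam • 1).det := by
  rw [formalDet, RingHom.map_det, RingHom.mapMatrix_apply, formalMatrix_map_evalAt]

theorem twistμ_formalDet [∀ t, NeZero (q t)] (a : Fin ν → Fin ν → ((Fin d → ℤ) →₀ ℂ))
    (V : Fin ν → (Fin d → ℤ) → ℂ) (w : W d q) : twistμ w (formalDet a q V) = formalDet a q V := by
  rw [formalDet, AlgHom.map_det, AlgHom.mapMatrix_apply, formalMatrix_map_twistμ,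
    det_submatrix_equiv_self]

theorem dvd_of_forall_monomialChar_μ_eq_one [∀ t, NeZero (q t)] {β : Fin d → ℤ}
    (h : ∀ w : W d q, monomialChar (μ q (wz w)) (μ_ne_zero q _) (.ofAdd β) = 1) (t : Fin d) :
    (q t : ℤ) ∣ β t := by
  rcases eq_or_ne (q t) 1 with h1 | h1
  · simp [h1]
  -- `w = Pi.single t 1` turns the character into `β ↦ ζ ^ β t`, `ζ` a primitive `q t`-th root
  -- of unity; this needs `q t ≠ 1`, as `1 = 0` in `Fin 1`.
  set ζ := Complex.exp (2 * Real.pi * Complex.I / q t)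
  have hμ (s : Fin d) : μ q (wz (Pi.single t 1 : W d q)) s = if s = t then ζ else 1 := by
    by_cases hs : s = t
    · subst hs
      simp [μ, wz, e2πi, ζ, Nat.one_mod_eq_one.2 h1, div_eq_mul_inv]
    · simp [μ, wz, e2πi, hs]
  have hζ : monomialChar (μ q (wz (Pi.single t 1 : W d q))) (μ_ne_zero q _) (.ofAdd β) =
      ζ ^ β t := by
    simp [monomialChar, hμ]
  exact ((Complex.isPrimitiveRoot_exp _ (NeZero.ne _)).zpow_eq_one_iff_dvd _).1
    (hζ ▸ h (Pi.single t 1))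

theorem exists_evalAt_eq_sum_of_twistμ_eq_self [∀ t, NeZero (q t)] {f : LaurentRing d}
    (hf : ∀ w : W d q, twistμ w f = f) :
    ∃ c : (Fin d → ℤ) →₀ ℂ[X], ∀ (z : Fin d → ℂ) (hz : ∀ t, z t ≠ 0) (lam : ℂ),
      evalAt z hz lam f = c.sum fun α p => p.eval lam * ∏ t, z t ^ ((q t : ℤ) * α t) := by
  have hdvd : ∀ β ∈ f.coeff.support, ∀ t, (q t : ℤ) ∣ β t := by
    refine fun β hβ => dvd_of_forall_monomialChar_μ_eq_one fun w => ?_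
    by_contra hne
    refine Finsupp.mem_support_iff.1 hβ (coeff_eq_zero_of_twist_eq_self (hf w) ?_)
    simpa [map_eq_one_iff _ C_injective] using hne
  let φ : (Fin d → ℤ) → (Fin d → ℤ) := fun α t => q t * α t
  have hφ : Function.Injective φ := fun α α' h =>
    funext fun t => mul_left_cancel₀ (Nat.cast_ne_zero.2 (NeZero.ne (q t))) (congrFun h t)
  have hrange : ↑f.coeff.support ⊆ Set.range φ := fun β hβ =>
    ⟨fun t => β t / q t, funext fun t => Int.mul_ediv_cancel' (hdvd β hβ t)⟩
  refine ⟨f.coeff.comapDomain φ hφ.injOn, fun z hz lam => ?_⟩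
  rw [evalAt_apply]
  conv_lhs => rw [← Finsupp.mapDomain_comapDomain φ hφ f.coeff hrange]
  rw [Finsupp.sum_mapDomain_index_inj hφ]

end Floquet

theorem charpoly_invariance_and_descent_general
    (d ν : ℕ) (a : Fin ν → Fin ν → ((Fin d → ℤ) →₀ ℂ))
    (q : Fin d → ℕ) (hq : ∀ t, 1 ≤ q t)
    (V : Fin ν → (Fin d → ℤ) → ℂ) :
    (∀ (w : W d q) (z : Fin d → ℂ), (∀ t, z t ≠ 0) → ∀ lam : ℂ,
      Matrix.det (Dmat a q (fun t => μ q (wz w) t * z t) + Bmat ν q V - lam • 1) =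
        Matrix.det (Dmat a q z + Bmat ν q V - lam • 1)) ∧
    ∃ c : (Fin d → ℤ) →₀ Polynomial ℂ,
      ∀ (z : Fin d → ℂ), (∀ t, z t ≠ 0) → ∀ lam : ℂ,
        Matrix.det (Dmat a q z + Bmat ν q V - lam • 1) =
          Finsupp.sum c fun α p => Polynomial.eval lam p * ∏ t, z t ^ ((q t : ℤ) * α t) := by
  have : ∀ t, NeZero (q t) := fun t => NeZero.of_pos (hq t)
  refine ⟨fun w z hz lam => ?_, ?_⟩
  · rw [← evalAt_formalDet _ _ z hz, ← twistμ_formalDet (q := q) a V w, evalAt_twistμ,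
      evalAt_formalDet]
  · obtain ⟨c, hc⟩ := exists_evalAt_eq_sum_of_twistμ_eq_self (twistμ_formalDet (q := q) a V)
    exact ⟨c, fun z hz lam => by rw [← evalAt_formalDet _ _ z hz, hc]⟩

/-- **Proposition (invariance of the characteristic polynomial)**:
`P̃(z,λ) = det(D_z + B_V - λI)` satisfies `P̃(μ_w ⊙ z, λ) = P̃(z,λ)` for every
`w ∈ W`; consequently `P̃(z,λ) = P(z^{⊙q}, λ)` for a suitable function `P`
which is a Laurent polynomial in `y` and a polynomial in `λ` (encoded by its
finitely many coefficients `c : (Fin d → ℤ) →₀ Polynomial ℂ`). -/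
theorem charpoly_invariance_and_descent
    (d ν : ℕ) (a : Fin ν → Fin ν → ((Fin d → ℤ) →₀ ℂ))
    (q : Fin d → ℕ) (hq : ∀ t, 1 ≤ q t)
    (V : Fin ν → (Fin d → ℤ) → ℂ) (hV : QPeriodic q V) :
    (∀ (w : W d q) (z : Fin d → ℂ), (∀ t, z t ≠ 0) → ∀ lam : ℂ,
      Matrix.det (Dmat a q (fun t => μ q (wz w) t * z t) + Bmat ν q V - lam • 1) =
        Matrix.det (Dmat a q z + Bmat ν q V - lam • 1)) ∧
    ∃ c : (Fin d → ℤ) →₀ Polynomial ℂ,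
      ∀ (z : Fin d → ℂ), (∀ t, z t ≠ 0) → ∀ lam : ℂ,
        Matrix.det (Dmat a q z + Bmat ν q V - lam • 1) =
          Finsupp.sum c fun α p => Polynomial.eval lam p * ∏ t, z t ^ ((q t : ℤ) * α t) :=
  charpoly_invariance_and_descent_general d ν a q hq V
end
end
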